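/- Suppose the finite relational structure A has a weak near-unanimity polymorphism of arity m (m ≥ 2). Then the digraph D(A) also has a weak near-unanimity polymorphism of arity m. Conversely, if D(A) has an m-ary WNU polymorphism, so does A. -/

import Mathlib

/-!
`D(A)` is balanced: bases sit at level `0`, tops at level `k + 2`, and every edge climbs one
level. The gadget `Q_I` has a height-preserving homomorphism to `Q_J` fixing its ends iff
`I ⊆ J`. If `I ⊆ J`, every zigzag of `Q_I` folds onto the spine or onto the zigzag of `Q_J` at
the same height. Conversely, a spine vertex at height `l + 1` with `l ∈ I` lies inside three
consecutive forward edges; its image is then the spine vertex of `Q_J` at that height, followed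
by a vertex with a forward edge out, so not the top of a zigzag, i.e. `l ∈ J`. In `D(A)` the
interior of a walk along `Q_I` from a base `a` to a top `r` consists of inner vertices, each on a
single connecting path, so the walk runs inside `P_(a, r)`: it exists iff `a = r i` for all
`i ∈ I`.

Hence a WNU polymorphism `F` of `D(A)` maps tuples of bases to bases, and its restriction to `A`
preserves `R` (walk along `Q_{i}` from `r i` to `r`) and satisfies the same identities.
Conversely a WNU polymorphism `f` of `A` lifts: a tuple at a common level on the paths
`P_(a j, r j)` goes to `P_(f a, f r)` at that height, onto the zigzag there if some entry is a
peak or a valley of its path and onto the spine otherwise; a tuple with several levels goes to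
its lowest entry. The output depends only on `f`-images and on which entries are peaks or
valleys, so the WNU identities carry over, and edges are preserved because `f` keeps every
index common to all `P_(a j, r j)` an index of `P_(f a, f r)`.
-/

/-- The positions `i ∈ [k]` at which `a` equals the `i`-th entry of `r`. -/
def idxSet {A : Type} [DecidableEq A] {k : ℕ} (a : A) (r : Fin k → A) : Finset (Fin k) :=
  Finset.univ.filter (fun i => a = r i)

/-- Direction pattern of the oriented path `Q_I`: a single edge, then for each
`l ∈ [k]` a single edge (if `l ∈ I`) or a zigzag (otherwise), then a single edge. -/
def qdirs {k : ℕ} (I : Finset (Fin k)) : List Bool :=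
  [true] ++ ((List.finRange k).flatMap
    (fun l => if l ∈ I then [true] else [true, false, true])) ++ [true]

/-- Edge relation of the oriented path with direction pattern `ds`
(vertices are `0, 1, ..., ds.length`). -/
def pedge (ds : List Bool) (x y : ℕ) : Prop :=
  (y = x + 1 ∧ x < ds.length ∧ ds.getD x false = true) ∨
  (x = y + 1 ∧ y < ds.length ∧ ds.getD y false = false)

/-- Number of edges of the connecting path `P_(a,r) = Q_{idxSet a r}`. -/
def plen {A : Type} [DecidableEq A] {k : ℕ} (a : A) (r : Fin k → A) : ℕ :=
  (qdirs (idxSet a r)).length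

/-- Vertices of the digraph `D(A)` for the structure `(A; R)`. -/
inductive DVert {A : Type} [DecidableEq A] {k : ℕ} (R : Set (Fin k → A)) : Type where
  | base : A → DVert R
  | top : (r : Fin k → A) → r ∈ R → DVert R
  | inner : (a : A) → (r : Fin k → A) → r ∈ R → (j : ℕ) → 0 < j → j < plen a r → DVert R

/-- `isAt v a r x` : vertex `v` of `D(A)` sits at position `x` of the connecting path
`P_(a,r)`. -/
def isAt {A : Type} [DecidableEq A] {k : ℕ} {R : Set (Fin k → A)} :
    DVert R → A → (Fin k → A) → ℕ → Prop
  | .base a', a, _, x => a' = a ∧ x = 0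
  | .top r' _, a, r, x => r' = r ∧ x = plen a r
  | .inner a' r' _ j _ _, a, r, x => a' = a ∧ r' = r ∧ x = j

/-- The edge relation of the digraph `D(A)`. -/
def dedge {A : Type} [DecidableEq A] {k : ℕ} {R : Set (Fin k → A)}
    (u v : DVert R) : Prop :=
  ∃ a r, r ∈ R ∧ ∃ x y, isAt u a r x ∧ isAt v a r y ∧
    pedge (qdirs (idxSet a r)) x y

/-- Height of position `x` along a path with direction pattern `ds`. -/
def phgt (ds : List Bool) (x : ℕ) : ℤ :=
  ((ds.take x).count true : ℤ) - ((ds.take x).count false : ℤ)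

/-- The level function of the balanced digraph `D(A)`. -/
def lvlD {A : Type} [DecidableEq A] {k : ℕ} {R : Set (Fin k → A)} : DVert R → ℕ
  | .base _ => 0
  | .top _ _ => k + 2
  | .inner a r _ j _ _ => (phgt (qdirs (idxSet a r)) j).toNat

/-- `walkAlong ds u v` : one can walk in `D(A)` from `u` to `v` following the
oriented path with direction pattern `ds` (i.e. there is a homomorphism of the path
into `D(A)` sending the initial vertex to `u` and the terminal vertex to `v`). -/
def walkAlong {A : Type} [DecidableEq A] {k : ℕ} {R : Set (Fin k → A)}
    (ds : List Bool) (u v : DVert R) : Prop :=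
  ∃ φ : ℕ → DVert R, φ 0 = u ∧ φ ds.length = v ∧
    ∀ x < ds.length,
      (ds.getD x false = true → dedge (φ x) (φ (x + 1))) ∧
      (ds.getD x false = false → dedge (φ (x + 1)) (φ x))

/-- `f` is an `m`-ary weak near-unanimity operation on `B`: idempotent and
`f(x,...,x,y) = f(x,...,y,x) = ⋯ = f(y,x,...,x)`. -/
def IsWNU {B : Type} (m : ℕ) (f : (Fin m → B) → B) : Prop :=
  (∀ x : B, f (fun _ => x) = x) ∧
  ∀ (x y : B) (p q : Fin m),
    f (fun i => if i = p then y else x) = f (fun i => if i = q then y else x)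

section Gadgets

variable {k : ℕ} (I : Finset (Fin k))

def MemVal (l : ℕ) : Prop := ∃ h : l < k, (⟨l, h⟩ : Fin k) ∈ I

def qprefix (l : ℕ) : List Bool :=
  true :: ((List.finRange k).take l).flatMap
    (fun t => if t ∈ I then [true] else [true, false, true])

/-- `Q_I` climbs from height `0` to `k + 2` through its spine vertices at heights `1, …, k + 1`;
between those at heights `l + 1` and `l + 2` it has one edge if `l ∈ I` and a zigzag
(up, down, up) otherwise. This is the position of the spine vertex at height `l + 1`. -/
def spine (l : ℕ) : ℕ := (qprefix I l).length

open Classical in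
lemma qprefix_succ {l : ℕ} (h : l < k) :
    qprefix I (l + 1) = qprefix I l ++ if MemVal I l then [true] else [true, false, true] := by
  have hl : l < (List.finRange k).length := by simpa
  have hmem : MemVal I l ↔ (⟨l, h⟩ : Fin k) ∈ I := ⟨fun ⟨_, h'⟩ => h', fun h' => ⟨h, h'⟩⟩
  simp only [qprefix, List.take_add_one, List.getElem?_eq_getElem hl, List.getElem_finRange,
    Option.toList_some, List.flatMap_append, List.flatMap_singleton, Fin.cast_mk]
  by_cases hI : (⟨l, h⟩ : Fin k) ∈ I <;> simp [hI, hmem]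

lemma qdirs_eq_qprefix : qdirs I = qprefix I k ++ [true] := by
  simp [qdirs, qprefix, List.take_of_length_le (le_of_eq (List.length_finRange (n := k)))]

lemma spine_zero : spine I 0 = 1 := by simp [spine, qprefix]

lemma spine_succ_of_mem {l : ℕ} (h : l < k) (hl : MemVal I l) :
    spine I (l + 1) = spine I l + 1 := by
  classical
  simp [spine, qprefix_succ I h, hl]

lemma spine_succ_of_not_mem {l : ℕ} (h : l < k) (hl : ¬ MemVal I l) :
    spine I (l + 1) = spine I l + 3 := by
  classical
  simp [spine, qprefix_succ I h, hl]

lemma one_le_spine (l : ℕ) : 1 ≤ spine I l := by simp [spine, qprefix]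

lemma spine_lt_spine_succ {l : ℕ} (h : l < k) : spine I l < spine I (l + 1) := by
  by_cases hl : MemVal I l
  · rw [spine_succ_of_mem I h hl]; omega
  · rw [spine_succ_of_not_mem I h hl]; omega

lemma spine_mono {l l' : ℕ} (h : l ≤ l') (h' : l' ≤ k) : spine I l ≤ spine I l' := by
  induction l', h using Nat.le_induction with
  | base => exact le_rfl
  | succ n _ ih => exact (ih (by omega)).trans (spine_lt_spine_succ I (by omega)).le

lemma length_qdirs : (qdirs I).length = spine I k + 1 := by
  simp [qdirs_eq_qprefix, spine]

lemma two_le_length_qdirs : 2 ≤ (qdirs I).length := by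
  have := one_le_spine I k
  rw [length_qdirs]; omega

lemma spine_lt_length {l : ℕ} (h : l ≤ k) : spine I l < (qdirs I).length := by
  rw [length_qdirs]; exact Nat.lt_succ_of_le (spine_mono I h le_rfl)

lemma qdirs_eq_qprefix_append {l : ℕ} (h : l ≤ k) :
    ∃ w, qdirs I = qprefix I l ++ true :: w := by
  classical
  induction h using Nat.decreasingInduction with
  | self => exact ⟨[], qdirs_eq_qprefix I⟩
  | of_succ l hl ih =>
    obtain ⟨w, hw⟩ := ih
    rw [qprefix_succ I hl] at hw
    split_ifs at hw
    · exact ⟨true :: w, by simp [hw]⟩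
    · exact ⟨false :: true :: true :: w, by simp [hw]⟩

lemma getD_qdirs_zero : (qdirs I).getD 0 false = true := by simp [qdirs]

lemma getD_qdirs_spine {l : ℕ} (h : l ≤ k) : (qdirs I).getD (spine I l) false = true := by
  obtain ⟨w, hw⟩ := qdirs_eq_qprefix_append I h
  rw [hw, spine, List.getD_append_right _ _ _ _ le_rfl]
  simp

lemma getD_qdirs_zigzag {l : ℕ} (h : l < k) (hl : ¬ MemVal I l) :
    (qdirs I).getD (spine I l + 1) false = false ∧
      (qdirs I).getD (spine I l + 2) false = true := by
  classical
  obtain ⟨w, hw⟩ := qdirs_eq_qprefix_append I (Nat.succ_le_of_lt h)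
  rw [qprefix_succ I h, if_neg hl] at hw
  constructor <;>
  · rw [hw, List.append_assoc, List.getD_append_right _ _ _ _ (by rw [spine]; omega)]
    simp [spine]

lemma getD_qdirs_pred_spine {l : ℕ} (h : l ≤ k) :
    (qdirs I).getD (spine I l - 1) false = true := by
  cases l with
  | zero => simpa [spine_zero] using getD_qdirs_zero I
  | succ t =>
    by_cases ht : MemVal I t
    · simpa [spine_succ_of_mem I h ht] using getD_qdirs_spine I (Nat.le_of_succ_le h)
    · simpa [spine_succ_of_not_mem I h ht] using (getD_qdirs_zigzag I h ht).2

lemma phgt_zero (ds : List Bool) : phgt ds 0 = 0 := by simp [phgt]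

lemma phgt_succ (ds : List Bool) {x : ℕ} (hx : x < ds.length) :
    phgt ds (x + 1) = phgt ds x + if ds.getD x false then 1 else -1 := by
  rw [phgt, phgt, List.take_add_one, List.getElem?_eq_getElem hx, List.getD_eq_getElem _ _ hx]
  cases ds[x] <;> simp <;> ring

lemma phgt_qprefix {l : ℕ} (h : l ≤ k) :
    ((qprefix I l).count true : ℤ) - (qprefix I l).count false = l + 1 := by
  classical
  induction l with
  | zero => simp [qprefix]
  | succ n ih =>
    rw [qprefix_succ I h, List.count_append, List.count_append, Nat.cast_add, Nat.cast_add]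
    have := ih (by omega)
    split_ifs <;> simp <;> omega

lemma phgt_spine {l : ℕ} (h : l ≤ k) : phgt (qdirs I) (spine I l) = l + 1 := by
  obtain ⟨w, hw⟩ := qdirs_eq_qprefix_append I h
  rw [phgt, hw, spine, List.take_left, phgt_qprefix I h]

lemma phgt_length : phgt (qdirs I) (qdirs I).length = k + 2 := by
  rw [phgt, List.take_length, qdirs_eq_qprefix, List.count_append, List.count_append,
    Nat.cast_add, Nat.cast_add]
  have := phgt_qprefix I le_rfl
  simp; omega

lemma phgt_spine_succ {l : ℕ} (h : l ≤ k) :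
    phgt (qdirs I) (spine I l + 1) = l + 2 := by
  rw [phgt_succ _ (spine_lt_length I h), getD_qdirs_spine I h, phgt_spine I h]
  simp; ring

lemma phgt_valley {l : ℕ} (h : l < k) (hl : ¬ MemVal I l) :
    phgt (qdirs I) (spine I l + 2) = l + 1 := by
  have := spine_lt_length I (Nat.succ_le_of_lt h)
  rw [spine_succ_of_not_mem I h hl] at this
  rw [phgt_succ _ (by omega), (getD_qdirs_zigzag I h hl).1, phgt_spine_succ I h.le]
  simp; ring

lemma lt_spine_cases {l : ℕ} (hl : l ≤ k) {p : ℕ} (hp : p < spine I l) :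
    p = 0 ∨ ∃ t < l, p = spine I t ∨ ¬ MemVal I t ∧ (p = spine I t + 1 ∨ p = spine I t + 2) := by
  induction l with
  | zero => rw [spine_zero] at hp; omega
  | succ n ih =>
    by_cases hpn : p < spine I n
    · rcases ih (by omega) hpn with h0 | ⟨t, ht, h⟩
      · exact Or.inl h0
      · exact Or.inr ⟨t, by omega, h⟩
    · refine Or.inr ⟨n, by omega, ?_⟩
      by_cases hn : MemVal I n
      · rw [spine_succ_of_mem I (by omega) hn] at hp
        exact Or.inl (by omega)
      · rw [spine_succ_of_not_mem I (by omega) hn] at hp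
        obtain h | h | h : p = spine I n ∨ p = spine I n + 1 ∨ p = spine I n + 2 := by omega
        exacts [Or.inl h, Or.inr ⟨hn, Or.inl h⟩, Or.inr ⟨hn, Or.inr h⟩]

lemma qdirs_position_cases {p : ℕ} (hp : p ≤ (qdirs I).length) :
    p = 0 ∨ p = (qdirs I).length ∨ (∃ t ≤ k, p = spine I t) ∨
      ∃ t < k, ¬ MemVal I t ∧ (p = spine I t + 1 ∨ p = spine I t + 2) := by
  rw [length_qdirs] at hp ⊢
  rcases Nat.lt_or_ge p (spine I k) with hlt | hge
  · rcases lt_spine_cases I le_rfl hlt with h0 | ⟨t, ht, h | h⟩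
    · exact Or.inl h0
    · exact Or.inr (Or.inr (Or.inl ⟨t, ht.le, h⟩))
    · exact Or.inr (Or.inr (Or.inr ⟨t, ht, h⟩))
  · rcases Nat.eq_or_lt_of_le hge with h | h
    · exact Or.inr (Or.inr (Or.inl ⟨k, le_rfl, h.symm⟩))
    · exact Or.inr (Or.inl (by omega))

lemma eq_peak_of_getD_qdirs {p : ℕ} (hp : p < (qdirs I).length)
    (hF : (qdirs I).getD p false = false) : ∃ t < k, ¬ MemVal I t ∧ p = spine I t + 1 := by
  rcases qdirs_position_cases I hp.le with rfl | rfl | ⟨t, ht, rfl⟩ | ⟨t, ht, hI, rfl | rfl⟩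
  · rw [getD_qdirs_zero] at hF; cases hF
  · omega
  · rw [getD_qdirs_spine I ht] at hF; cases hF
  · exact ⟨t, ht, hI, rfl⟩
  · rw [(getD_qdirs_zigzag I ht hI).2] at hF; cases hF

lemma phgt_interior {p : ℕ} (hp0 : 0 < p) (hp : p < (qdirs I).length) :
    1 ≤ phgt (qdirs I) p ∧ phgt (qdirs I) p ≤ k + 1 := by
  rcases qdirs_position_cases I hp.le with rfl | rfl | ⟨t, ht, rfl⟩ | ⟨t, ht, hI, rfl | rfl⟩
  · omega
  · omega
  · rw [phgt_spine I ht]; omega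
  · rw [phgt_spine_succ I ht.le]; omega
  · rw [phgt_valley I ht hI]; omega

/-- In `Q_I`: the top of a zigzag. -/
def IsPeak (ds : List Bool) (p : ℕ) : Prop := pedge ds (p + 1) p

/-- In `Q_I`: the bottom of a zigzag. -/
def IsValley (ds : List Bool) (p : ℕ) : Prop := 0 < p ∧ pedge ds p (p - 1)

lemma isPeak_iff {ds : List Bool} {p : ℕ} :
    IsPeak ds p ↔ p < ds.length ∧ ds.getD p false = false := by
  refine ⟨?_, fun h => Or.inr ⟨rfl, h⟩⟩
  rintro (⟨h, -⟩ | ⟨-, h⟩)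
  exacts [absurd h (by omega), h]

lemma pedge_phgt {ds : List Bool} {x y : ℕ} (h : pedge ds x y) : phgt ds y = phgt ds x + 1 := by
  rcases h with ⟨rfl, hx, hT⟩ | ⟨rfl, hy, hF⟩
  · rw [phgt_succ ds hx, hT]; simp
  · rw [phgt_succ ds hy, hF]; simp

lemma pedge_le_length {ds : List Bool} {x y : ℕ} (h : pedge ds x y) :
    x ≤ ds.length ∧ y ≤ ds.length := by
  unfold pedge at h; omega

lemma pedge_zero_one : pedge (qdirs I) 0 1 :=
  Or.inl ⟨rfl, by rw [length_qdirs]; omega, getD_qdirs_zero I⟩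

lemma pedge_spine {l : ℕ} (h : l ≤ k) : pedge (qdirs I) (spine I l) (spine I l + 1) :=
  Or.inl ⟨rfl, spine_lt_length I h, getD_qdirs_spine I h⟩

lemma pedge_valley_peak {l : ℕ} (h : l < k) (hl : ¬ MemVal I l) :
    pedge (qdirs I) (spine I l + 2) (spine I l + 1) := by
  refine Or.inr ⟨rfl, ?_, (getD_qdirs_zigzag I h hl).1⟩
  have := spine_lt_length I (Nat.succ_le_of_lt h)
  rw [spine_succ_of_not_mem I h hl] at this; omega

lemma pedge_valley_spine {l : ℕ} (h : l < k) (hl : ¬ MemVal I l) :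
    pedge (qdirs I) (spine I l + 2) (spine I (l + 1)) := by
  have := spine_lt_length I (Nat.succ_le_of_lt h)
  rw [spine_succ_of_not_mem I h hl] at this ⊢
  exact Or.inl ⟨rfl, by omega, (getD_qdirs_zigzag I h hl).2⟩

lemma eq_of_pedge_spine {l q : ℕ} (h : l ≤ k) (hq : pedge (qdirs I) (spine I l) q) :
    q = spine I l + 1 := by
  rcases hq with ⟨rfl, -⟩ | ⟨hq, -, hF⟩
  · rfl
  · have := one_le_spine I l
    rw [show q = spine I l - 1 by omega, getD_qdirs_pred_spine I h] at hF
    cases hF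

lemma isPeak_qdirs_iff {p : ℕ} :
    IsPeak (qdirs I) p ↔ ∃ t < k, ¬ MemVal I t ∧ p = spine I t + 1 := by
  rw [isPeak_iff]
  constructor
  · exact fun ⟨hp, hF⟩ => eq_peak_of_getD_qdirs I hp hF
  · rintro ⟨t, ht, hI, rfl⟩
    refine ⟨?_, (getD_qdirs_zigzag I ht hI).1⟩
    have := spine_lt_length I (Nat.succ_le_of_lt ht)
    rw [spine_succ_of_not_mem I ht hI] at this; omega

lemma isValley_qdirs_iff {p : ℕ} :
    IsValley (qdirs I) p ↔ ∃ t < k, ¬ MemVal I t ∧ p = spine I t + 2 := by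
  constructor
  · rintro ⟨hp, he⟩
    have : IsPeak (qdirs I) (p - 1) := by rwa [IsPeak, Nat.sub_add_cancel hp]
    obtain ⟨t, ht, hI, h⟩ := (isPeak_qdirs_iff I).1 this
    exact ⟨t, ht, hI, by omega⟩
  · rintro ⟨t, ht, hI, rfl⟩
    exact ⟨by omega, by simpa using pedge_valley_peak I ht hI⟩

lemma not_pedge_of_isPeak {p q : ℕ} (hp : IsPeak (qdirs I) p) : ¬ pedge (qdirs I) p q := by
  obtain ⟨t, ht, hI, rfl⟩ := (isPeak_qdirs_iff I).1 hp
  rintro (⟨-, -, hT⟩ | ⟨hq, -, hF⟩)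
  · rw [(getD_qdirs_zigzag I ht hI).1] at hT; cases hT
  · rw [show q = spine I t by omega, getD_qdirs_spine I ht.le] at hF; cases hF

lemma not_pedge_of_isValley {p q : ℕ} (hp : IsValley (qdirs I) p) : ¬ pedge (qdirs I) q p := by
  obtain ⟨t, ht, hI, rfl⟩ := (isValley_qdirs_iff I).1 hp
  rintro (⟨hq, -, hT⟩ | ⟨-, -, hF⟩)
  · rw [show q = spine I t + 1 by omega, (getD_qdirs_zigzag I ht hI).1] at hT; cases hT
  · rw [(getD_qdirs_zigzag I ht hI).2] at hF; cases hF

lemma not_isValley_length : ¬ IsValley (qdirs I) (qdirs I).length := by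
  rw [isValley_qdirs_iff, length_qdirs]
  rintro ⟨t, ht, hI, h⟩
  have := spine_succ_of_not_mem I ht hI
  have := spine_mono I (show t + 1 ≤ k by omega) le_rfl
  omega

lemma phgt_qdirs_bounds {p : ℕ} (hp : p ≤ (qdirs I).length) :
    0 ≤ phgt (qdirs I) p ∧ phgt (qdirs I) p ≤ k + 2 := by
  rcases Nat.eq_zero_or_pos p with rfl | hp0
  · rw [phgt_zero]; omega
  rcases Nat.lt_or_ge p (qdirs I).length with hpL | hpL
  · have := phgt_interior I hp0 hpL; omega
  · rw [show p = (qdirs I).length by omega, phgt_length]; omega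

end Gadgets

section Folding

open scoped Classical

variable {k : ℕ}

/-- Where `Q_J` receives a vertex at height `s` that is a peak (`P`), a valley (`V`) or neither:
to the zigzag of `J` at height `s` if there is one, and to the spine otherwise. -/
noncomputable def foldPos (J : Finset (Fin k)) (s : ℕ) (P V : Prop) : ℕ :=
  if s = 0 then 0
  else if k + 2 ≤ s then (qdirs J).length
  else if 2 ≤ s ∧ ¬ MemVal J (s - 2) ∧ P then spine J (s - 2) + 1
  else if s ≤ k ∧ ¬ MemVal J (s - 1) ∧ V then spine J (s - 1) + 2
  else spine J (s - 1)

section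

variable (J : Finset (Fin k)) {s : ℕ} {P V : Prop}

lemma foldPos_le : foldPos J s P V ≤ (qdirs J).length := by
  have := spine_lt_length J (le_refl k)
  unfold foldPos
  split_ifs with h0 hk hP hV
  · omega
  · exact le_rfl
  · have := spine_mono J (show s - 2 ≤ s - 1 by omega) (by omega)
    have := spine_lt_spine_succ J (show s - 2 < k by omega)
    have := spine_mono J (show s - 2 + 1 ≤ k by omega) le_rfl
    omega
  · have := spine_succ_of_not_mem J (show s - 1 < k by omega) hV.2.1
    have := spine_mono J (show s - 1 + 1 ≤ k by omega) le_rfl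
    omega
  · have := spine_mono J (show s - 1 ≤ k by omega) le_rfl
    omega

lemma foldPos_of_not_peak (h1 : 1 ≤ s) (h2 : s ≤ k + 1) (hP : ¬ P) :
    foldPos J s P V =
      if s ≤ k ∧ ¬ MemVal J (s - 1) ∧ V then spine J (s - 1) + 2 else spine J (s - 1) := by
  simp [foldPos, hP, show s ≠ 0 by omega, show ¬ k + 2 ≤ s by omega]

lemma foldPos_of_not_valley (h2 : 2 ≤ s) (h3 : s ≤ k + 1) (hV : ¬ V) :
    foldPos J s P V =
      if ¬ MemVal J (s - 2) ∧ P then spine J (s - 2) + 1 else spine J (s - 1) := by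
  simp [foldPos, hV, show s ≠ 0 by omega, show ¬ k + 2 ≤ s by omega, h2]

lemma foldPos_self {p : ℕ} (hp : p ≤ (qdirs J).length) (hs : phgt (qdirs J) p = s) :
    foldPos J s (IsPeak (qdirs J) p) (IsValley (qdirs J) p) = p := by
  rcases qdirs_position_cases J hp with rfl | rfl | ⟨t, ht, rfl⟩ | ⟨t, ht, hI, rfl | rfl⟩
  · rw [phgt_zero] at hs
    simp [foldPos, show s = 0 by omega]
  · rw [phgt_length] at hs
    simp [foldPos, show s = k + 2 by omega]
  · rw [phgt_spine J ht] at hs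
    have hP : ¬ IsPeak (qdirs J) (spine J t) := fun h => by
      rw [isPeak_iff, getD_qdirs_spine J ht] at h; cases h.2
    have hV : ¬ IsValley (qdirs J) (spine J t) := fun ⟨_, h⟩ => by
      have := eq_of_pedge_spine J ht h; omega
    rw [foldPos_of_not_peak J (by omega) (by omega) hP, if_neg (fun h => hV h.2.2)]
    congr; omega
  · rw [phgt_spine_succ J ht.le] at hs
    have hP : IsPeak (qdirs J) (spine J t + 1) := (isPeak_qdirs_iff J).2 ⟨t, ht, hI, rfl⟩
    simp [foldPos, hP, hI, show s = t + 2 by omega, show ¬ k + 2 ≤ t + 2 by omega]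
  · rw [phgt_valley J ht hI] at hs
    have hP : ¬ IsPeak (qdirs J) (spine J t + 2) := fun h => by
      rw [isPeak_iff, (getD_qdirs_zigzag J ht hI).2] at h; cases h.2
    have hV : IsValley (qdirs J) (spine J t + 2) := (isValley_qdirs_iff J).2 ⟨t, ht, hI, rfl⟩
    rw [foldPos_of_not_peak J (by omega) (by omega) hP, if_pos ⟨by omega, by
      rwa [show s - 1 = t by omega], hV⟩]
    congr; omega

end

lemma isValley_or_isPeak_of_pedge (I : Finset (Fin k)) {x y s : ℕ} (hxy : pedge (qdirs I) x y)
    (hs : phgt (qdirs I) x = s) (h₁ : 1 ≤ s) (hk : s ≤ k) (hI : ¬ MemVal I (s - 1)) :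
    IsValley (qdirs I) x ∨ IsPeak (qdirs I) y := by
  by_contra! h
  have hx := foldPos_self I (pedge_le_length hxy).1 hs
  rw [foldPos_of_not_peak I h₁ (by omega) (fun h' => not_pedge_of_isPeak I h' hxy),
    if_neg (fun h' => h.1 h'.2.2)] at hx
  have hy := foldPos_self (s := s + 1) I (pedge_le_length hxy).2
    (by rw [pedge_phgt hxy, hs]; push_cast; rfl)
  rw [foldPos_of_not_valley I (by omega) (by omega) (fun h' => not_pedge_of_isValley I h' hxy),
    if_neg (fun h' => h.2 h'.2), show s + 1 - 1 = s by omega] at hy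
  have := eq_of_pedge_spine I (by omega) (hx ▸ hxy)
  have e : spine I s = spine I (s - 1) + 3 := by
    rw [← spine_succ_of_not_mem I (by omega) hI, Nat.sub_add_cancel h₁]
  omega

theorem foldPos_pedge {ι : Type*} [Nonempty ι] {I : ι → Finset (Fin k)} {J : Finset (Fin k)}
    (hJ : ∀ l, (∀ j, MemVal (I j) l) → MemVal J l) {x y : ι → ℕ} {s : ℕ}
    (hxy : ∀ j, pedge (qdirs (I j)) (x j) (y j)) (hs : ∀ j, phgt (qdirs (I j)) (x j) = s) :
    pedge (qdirs J)
      (foldPos J s (∃ j, IsPeak (qdirs (I j)) (x j)) (∃ j, IsValley (qdirs (I j)) (x j)))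
      (foldPos J (s + 1) (∃ j, IsPeak (qdirs (I j)) (y j))
        (∃ j, IsValley (qdirs (I j)) (y j))) := by
  obtain ⟨j₀⟩ := ‹Nonempty ι›
  have hPx : ¬ ∃ j, IsPeak (qdirs (I j)) (x j) :=
    fun ⟨j, h⟩ => not_pedge_of_isPeak (I j) h (hxy j)
  have hVy : ¬ ∃ j, IsValley (qdirs (I j)) (y j) :=
    fun ⟨j, h⟩ => not_pedge_of_isValley (I j) h (hxy j)
  have hsk : s ≤ k + 1 := by
    have := (phgt_qdirs_bounds (I j₀) (pedge_le_length (hxy j₀)).2).2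
    have := pedge_phgt (hxy j₀)
    have := hs j₀
    omega
  rcases Nat.eq_zero_or_pos s with rfl | hs1
  · simpa [foldPos, hVy, spine_zero] using pedge_zero_one J
  rcases Nat.lt_or_ge s (k + 1) with hsk' | hsk'
  · rw [foldPos_of_not_peak J hs1 hsk hPx, foldPos_of_not_valley J (by omega) (by omega) hVy,
      show s + 1 - 2 = s - 1 by omega, show s + 1 - 1 = s by omega]
    have hs' : s - 1 < k := by omega
    have hsucc : s - 1 + 1 = s := by omega
    by_cases hJs : MemVal J (s - 1)
    · have e : spine J s = spine J (s - 1) + 1 := by rw [← spine_succ_of_mem J hs' hJs, hsucc]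
      simpa [hJs, e] using pedge_spine J hs'.le
    have hVP : (∃ j, IsValley (qdirs (I j)) (x j)) ∨ ∃ j, IsPeak (qdirs (I j)) (y j) := by
      obtain ⟨j, hj⟩ : ∃ j, ¬ MemVal (I j) (s - 1) := by
        by_contra! h
        exact hJs (hJ _ h)
      exact (isValley_or_isPeak_of_pedge (I j) (hxy j) (hs j) hs1 (by omega) hj).imp
        (⟨j, ·⟩) (⟨j, ·⟩)
    by_cases hV : ∃ j, IsValley (qdirs (I j)) (x j) <;>
      by_cases hP : ∃ j, IsPeak (qdirs (I j)) (y j)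
    · simpa [hJs, hV, hP, show s ≤ k by omega] using pedge_valley_peak J hs' hJs
    · simpa [hJs, hV, hP, show s ≤ k by omega, hsucc] using pedge_valley_spine J hs' hJs
    · simpa [hJs, hV, hP] using pedge_spine J hs'.le
    · tauto
  · obtain rfl : s = k + 1 := by omega
    rw [foldPos_of_not_peak J hs1 hsk hPx, if_neg (by omega)]
    simpa [foldPos, length_qdirs] using pedge_spine J le_rfl

def IsPathHom {V : Type*} (E : V → V → Prop) (ds : List Bool) (φ : ℕ → V) : Prop :=
  ∀ x < ds.length, (ds.getD x false = true → E (φ x) (φ (x + 1))) ∧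
    (ds.getD x false = false → E (φ (x + 1)) (φ x))

lemma IsPathHom.height {V : Type*} {E : V → V → Prop} {ds : List Bool} {φ : ℕ → V}
    (hφ : IsPathHom E ds φ) {h : V → ℤ} (hE : ∀ u v, E u v → h v = h u + 1) :
    ∀ x ≤ ds.length, h (φ x) = h (φ 0) + phgt ds x := by
  intro x hx
  induction x with
  | zero => simp [phgt_zero]
  | succ n ih =>
    have hn : n < ds.length := by omega
    rw [phgt_succ ds hn]
    cases hb : ds.getD n false
    · have := hE _ _ ((hφ n hn).2 hb); simp; linarith [ih hn.le]
    · have := hE _ _ ((hφ n hn).1 hb); simp; linarith [ih hn.le]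

noncomputable def qfold (I J : Finset (Fin k)) (p : ℕ) : ℕ :=
  foldPos J (phgt (qdirs I) p).toNat (IsPeak (qdirs I) p) (IsValley (qdirs I) p)

variable {I J : Finset (Fin k)}

lemma qfold_zero : qfold I J 0 = 0 := by simp [qfold, foldPos, phgt_zero]

lemma qfold_length : qfold I J (qdirs I).length = (qdirs J).length := by
  rw [qfold, phgt_length, show ((k : ℤ) + 2).toNat = k + 2 by omega]
  simp [foldPos]

lemma isPathHom_qfold (hIJ : ∀ l, MemVal I l → MemVal J l) :
    IsPathHom (pedge (qdirs J)) (qdirs I) (qfold I J) := by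
  have key : ∀ x y, pedge (qdirs I) x y → pedge (qdirs J) (qfold I J x) (qfold I J y) := by
    intro x y hxy
    have hx := (phgt_qdirs_bounds I (pedge_le_length hxy).1).1
    have hy : (phgt (qdirs I) y).toNat = (phgt (qdirs I) x).toNat + 1 := by
      rw [pedge_phgt hxy]; omega
    simpa only [qfold, hy, exists_const] using
      foldPos_pedge (ι := Unit) (I := fun _ => I) (J := J) (x := fun _ => x) (y := fun _ => y)
        (fun l h => hIJ l (h ())) (fun _ => hxy) (fun _ => (Int.toNat_of_nonneg hx).symm)
  intro t ht
  exact ⟨fun hT => key _ _ (Or.inl ⟨rfl, ht, hT⟩), fun hF => key _ _ (Or.inr ⟨rfl, ht, hF⟩)⟩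

theorem memVal_of_isPathHom {ψ : ℕ → ℕ} (hψ : IsPathHom (pedge (qdirs J)) (qdirs I) ψ)
    (h0 : ψ 0 = 0) {l : ℕ} (hl : MemVal I l) : MemVal J l := by
  obtain ⟨hlk, -⟩ := id hl
  set c := spine I l
  have hc := one_le_spine I l
  have hsucc : spine I (l + 1) = c + 1 := spine_succ_of_mem I hlk hl
  have hcL := spine_lt_length I (show l + 1 ≤ k by omega)
  have e₁ : pedge (qdirs J) (ψ (c - 1)) (ψ c) := by
    have := (hψ (c - 1) (by omega)).1 (getD_qdirs_pred_spine I hlk.le)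
    rwa [Nat.sub_add_cancel hc] at this
  have e₂ : pedge (qdirs J) (ψ c) (ψ (c + 1)) := (hψ c (by omega)).1 (getD_qdirs_spine I hlk.le)
  have e₃ : pedge (qdirs J) (ψ (c + 1)) (ψ (c + 2)) := by
    simpa [hsucc] using (hψ _ hcL).1 (getD_qdirs_spine I (show l + 1 ≤ k by omega))
  have hgt : phgt (qdirs J) (ψ c) = ((l + 1 : ℕ) : ℤ) := by
    have := hψ.height (fun _ _ => pedge_phgt) c (by omega)
    rw [this, h0, phgt_zero, phgt_spine I hlk.le]; push_cast; ring
  -- `ψ c` has an in- and an out-edge, so it is the spine vertex of `Q_J` at height `l + 1`; its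
  -- successor has an out-edge, so it is not a peak
  have hψc := foldPos_self J (pedge_le_length e₂).1 hgt
  rw [foldPos_of_not_peak J (by omega) (by omega) (fun h => not_pedge_of_isPeak J h e₂),
    if_neg (fun h => not_pedge_of_isValley J h.2.2 e₁), Nat.add_sub_cancel] at hψc
  have hψc₁ := eq_of_pedge_spine J hlk.le (hψc ▸ e₂)
  by_contra hJ
  exact not_pedge_of_isPeak J ((isPeak_qdirs_iff J).2 ⟨l, hlk, hJ, hψc₁⟩) e₃

end Folding

section DigraphD

variable {A : Type} [DecidableEq A] {k : ℕ} {R : Set (Fin k → A)}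

def vertAt (a : A) (r : Fin k → A) (hr : r ∈ R) (x : ℕ) : DVert R :=
  if h₀ : x = 0 then .base a
  else if h : x < plen a r then .inner a r hr x (Nat.pos_of_ne_zero h₀) h
  else .top r hr

variable {u v : DVert R} {a : A} {r : Fin k → A} {x : ℕ}

lemma isAt_vertAt (hr : r ∈ R) (hx : x ≤ plen a r) : isAt (vertAt a r hr x) a r x := by
  unfold vertAt
  split_ifs with h₀ h
  · exact ⟨rfl, h₀⟩
  · exact ⟨rfl, rfl, rfl⟩
  · exact ⟨rfl, by omega⟩

lemma vertAt_eq_of_isAt (hr : r ∈ R) (hu : isAt u a r x) : vertAt a r hr x = u := by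
  have : 2 ≤ plen a r := two_le_length_qdirs _
  cases u with
  | base a' => obtain ⟨rfl, rfl⟩ := hu; simp [vertAt]
  | top r' hr' => obtain ⟨rfl, rfl⟩ := hu; simp [vertAt, show plen a r' ≠ 0 by omega]
  | inner a' r' hr' j h₀ h₁ => obtain ⟨rfl, rfl, rfl⟩ := hu; simp [vertAt, h₁, h₀.ne']

lemma vertAt_zero (hr : r ∈ R) : vertAt a r hr 0 = .base a := rfl

lemma vertAt_plen (hr : r ∈ R) : vertAt a r hr (plen a r) = .top r hr :=
  vertAt_eq_of_isAt hr ⟨rfl, rfl⟩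

lemma isAt_level (hu : isAt u a r x) :
    x ≤ plen a r ∧ (lvlD u : ℤ) = phgt (qdirs (idxSet a r)) x := by
  cases u with
  | base a' =>
    obtain ⟨rfl, rfl⟩ := hu
    simp [lvlD, phgt_zero]
  | top r' hr' =>
    obtain ⟨rfl, rfl⟩ := hu
    simp [lvlD, plen, phgt_length]
  | inner a' r' hr' j h₀ h₁ =>
    obtain ⟨rfl, rfl, rfl⟩ := hu
    have := (phgt_interior (idxSet a' r') h₀ h₁).1
    simp only [lvlD]
    exact ⟨h₁.le, Int.toNat_of_nonneg (by omega)⟩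

lemma lvlD_inner_bounds (hr : r ∈ R) (h₀ : 0 < x) (h₁ : x < plen a r) :
    1 ≤ lvlD (DVert.inner a r hr x h₀ h₁) ∧ lvlD (DVert.inner a r hr x h₀ h₁) ≤ k + 1 := by
  have := phgt_interior (idxSet a r) h₀ h₁
  simp only [lvlD]; omega

lemma lvlD_le (u : DVert R) : lvlD u ≤ k + 2 := by
  cases u with
  | base => simp [lvlD]
  | top => simp [lvlD]
  | inner a r hr x h₀ h₁ => have := (lvlD_inner_bounds hr h₀ h₁).2; omega

lemma lvlD_dedge (h : dedge u v) : lvlD v = lvlD u + 1 := by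
  obtain ⟨a, r, -, x, y, hu, hv, hxy⟩ := h
  have := (isAt_level hu).2
  have := (isAt_level hv).2
  have := pedge_phgt hxy
  omega

lemma isAt_pos_unique {y : ℕ} (hx : isAt u a r x) (hy : isAt u a r y) : x = y := by
  cases u with
  | base => exact hx.2.trans hy.2.symm
  | top => exact hx.2.trans hy.2.symm
  | inner => exact hx.2.2.trans hy.2.2.symm

lemma isAt_path_unique {a' : A} {r' : Fin k → A} {x' : ℕ} (hx : isAt u a r x)
    (hx' : isAt u a' r' x') (h₀ : 0 < lvlD u) (hk : lvlD u < k + 2) : a' = a ∧ r' = r := by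
  cases u with
  | base => simp [lvlD] at h₀
  | top => simp [lvlD] at hk
  | inner => exact ⟨hx'.1.symm.trans hx.1, hx'.2.1.symm.trans hx.2.1⟩

lemma IsPathHom.comp {V W : Type*} {E : V → V → Prop} {E' : W → W → Prop} {ds : List Bool}
    {φ : ℕ → V} (hφ : IsPathHom E ds φ) {g : V → W} (hg : ∀ x y, E x y → E' (g x) (g y)) :
    IsPathHom E' ds (g ∘ φ) :=
  fun x hx => ⟨fun hT => hg _ _ ((hφ x hx).1 hT), fun hF => hg _ _ ((hφ x hx).2 hF)⟩

lemma walkAlong_pi {ι : Type*} {F : (ι → DVert R) → DVert R}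
    (hF : ∀ u v : ι → DVert R, (∀ j, dedge (u j) (v j)) → dedge (F u) (F v))
    {ds : List Bool} {u v : ι → DVert R} (hw : ∀ j, walkAlong ds (u j) (v j)) :
    walkAlong ds (F u) (F v) := by
  choose φ h0 hL hφ using hw
  exact ⟨fun x => F fun j => φ j x, congrArg F (funext h0), congrArg F (funext hL),
    fun x hx => ⟨fun hT => hF _ _ fun j => (hφ j x hx).1 hT,
      fun hB => hF _ _ fun j => (hφ j x hx).2 hB⟩⟩

lemma IsPathHom.lvlD_eq {ds : List Bool} {φ : ℕ → DVert R} (hφ : IsPathHom dedge ds φ) :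
    ∀ x ≤ ds.length, (lvlD (φ x) : ℤ) = lvlD (φ 0) + phgt ds x :=
  hφ.height (h := fun w => (lvlD w : ℤ)) fun _ _ h => by simp [lvlD_dedge h]

lemma lvlD_of_walkAlong {ds : List Bool} (h : walkAlong ds u v) :
    (lvlD v : ℤ) = lvlD u + phgt ds ds.length := by
  obtain ⟨φ, rfl, rfl, hφ⟩ := h
  exact IsPathHom.lvlD_eq hφ _ le_rfl

lemma exists_base_of_lvlD_eq_zero (h : lvlD u = 0) : ∃ a, u = .base a := by
  cases u with
  | base a => exact ⟨a, rfl⟩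
  | top => simp [lvlD] at h
  | inner a r hr x h₀ h₁ => have := (lvlD_inner_bounds hr h₀ h₁).1; omega

lemma exists_top_of_lvlD_eq (h : lvlD u = k + 2) : ∃ r hr, u = .top r hr := by
  cases u with
  | base => simp [lvlD] at h
  | top r hr => exact ⟨r, hr, rfl⟩
  | inner a r hr x h₀ h₁ => have := (lvlD_inner_bounds hr h₀ h₁).2; omega

lemma exists_isAt_of_lvlD (h₀ : 0 < lvlD u) (hk : lvlD u < k + 2) :
    ∃ a r, r ∈ R ∧ ∃ x, isAt u a r x := by
  cases u with
  | base => simp [lvlD] at h₀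
  | top => simp [lvlD] at hk
  | inner a r hr x => exact ⟨a, r, hr, x, rfl, rfl, rfl⟩

lemma dedge_isAt_of_inner_left (h : dedge u v) (hu : isAt u a r x) (h₀ : 0 < lvlD u)
    (hk : lvlD u < k + 2) : ∃ y, isAt v a r y ∧ pedge (qdirs (idxSet a r)) x y := by
  obtain ⟨a', r', -, x', y, hu', hv, hxy⟩ := h
  obtain ⟨rfl, rfl⟩ := isAt_path_unique hu hu' h₀ hk
  exact ⟨y, hv, isAt_pos_unique hu' hu ▸ hxy⟩

lemma dedge_isAt_of_inner_right {y : ℕ} (h : dedge u v) (hv : isAt v a r y) (h₀ : 0 < lvlD v)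
    (hk : lvlD v < k + 2) : ∃ x, isAt u a r x ∧ pedge (qdirs (idxSet a r)) x y := by
  obtain ⟨a', r', -, x, y', hu, hv', hxy⟩ := h
  obtain ⟨rfl, rfl⟩ := isAt_path_unique hv hv' h₀ hk
  exact ⟨x, hu, isAt_pos_unique hv' hv ▸ hxy⟩

variable {I : Finset (Fin k)} {φ : ℕ → DVert R}

lemma IsPathHom.lvlD_interior (hφ : IsPathHom dedge (qdirs I) φ) (h0 : φ 0 = .base a) {t : ℕ}
    (h₀ : 0 < t) (h₁ : t < (qdirs I).length) : 0 < lvlD (φ t) ∧ lvlD (φ t) < k + 2 := by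
  have := phgt_interior I h₀ h₁
  have := hφ.lvlD_eq t h₁.le
  rw [h0, show lvlD (DVert.base (R := R) a) = 0 from rfl] at this
  omega

/-- The interior vertices of the walk are inner, so consecutive ones share their connecting
path; its first and last edges then identify that path as `P_(a, r)`. -/
lemma IsPathHom.exists_isAt (hφ : IsPathHom dedge (qdirs I) φ) (h0 : φ 0 = .base a) {hr : r ∈ R}
    (hL : φ (qdirs I).length = .top r hr) : ∀ t ≤ (qdirs I).length, ∃ x, isAt (φ t) a r x := by
  have hL2 := two_le_length_qdirs I
  obtain ⟨a', r', -, x₀, y₀, hx₀, hy₀, -⟩ := (hφ 0 (by omega)).1 (getD_qdirs_zero I)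
  rw [h0] at hx₀
  obtain ⟨rfl, -⟩ := hx₀
  have hr' : ∀ t ≤ (qdirs I).length, 0 < t → ∃ x, isAt (φ t) a r' x := by
    intro t ht h₀
    induction t with
    | zero => omega
    | succ n ih =>
      rcases Nat.eq_zero_or_pos n with rfl | hn
      · exact ⟨y₀, hy₀⟩
      obtain ⟨x, hx⟩ := ih (by omega) hn
      obtain ⟨hn₀, hnk⟩ := hφ.lvlD_interior h0 hn (by omega)
      cases hb : (qdirs I).getD n false
      · obtain ⟨y, hy, -⟩ := dedge_isAt_of_inner_right ((hφ n (by omega)).2 hb) hx hn₀ hnk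
        exact ⟨y, hy⟩
      · obtain ⟨y, hy, -⟩ := dedge_isAt_of_inner_left ((hφ n (by omega)).1 hb) hx hn₀ hnk
        exact ⟨y, hy⟩
  obtain ⟨_, hrr'⟩ := hr' _ le_rfl (by omega)
  rw [hL] at hrr'
  obtain ⟨rfl, -⟩ := hrr'
  intro t ht
  rcases Nat.eq_zero_or_pos t with rfl | h₀
  · exact ⟨0, by rw [h0]; exact ⟨rfl, rfl⟩⟩
  · exact hr' t ht h₀

lemma exists_pathHom_of_walkAlong {hr : r ∈ R} (hw : walkAlong (qdirs I) (.base a) (.top r hr)) :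
    ∃ ψ : ℕ → ℕ, ψ 0 = 0 ∧ IsPathHom (pedge (qdirs (idxSet a r))) (qdirs I) ψ := by
  obtain ⟨φ, h0, hL, hφ⟩ := hw
  have hφ' : IsPathHom dedge (qdirs I) φ := hφ
  have hL2 := two_le_length_qdirs I
  have hon : ∀ t, ∃ x, t ≤ (qdirs I).length → isAt (φ t) a r x := fun t => by
    by_cases ht : t ≤ (qdirs I).length
    · obtain ⟨x, hx⟩ := hφ'.exists_isAt h0 hL t ht
      exact ⟨x, fun _ => hx⟩
    · exact ⟨0, fun h => absurd h ht⟩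
  choose ψ hψ using hon
  -- of the two ends of an edge of the walk, at least one is inner and fixes the positions
  have key : ∀ s s', s ≤ (qdirs I).length → s' ≤ (qdirs I).length →
      (0 < s ∧ s < (qdirs I).length) ∨ (0 < s' ∧ s' < (qdirs I).length) →
      dedge (φ s) (φ s') → pedge (qdirs (idxSet a r)) (ψ s) (ψ s') := by
    rintro s s' hs hs' (⟨h₀, h₁⟩ | ⟨h₀, h₁⟩) he
    · obtain ⟨hs₀, hsk⟩ := hφ'.lvlD_interior h0 h₀ h₁
      obtain ⟨y, hy, hp⟩ := dedge_isAt_of_inner_left he (hψ s hs) hs₀ hsk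
      rwa [isAt_pos_unique hy (hψ s' hs')] at hp
    · obtain ⟨hs₀, hsk⟩ := hφ'.lvlD_interior h0 h₀ h₁
      obtain ⟨x, hx, hp⟩ := dedge_isAt_of_inner_right he (hψ s' hs') hs₀ hsk
      rwa [isAt_pos_unique hx (hψ s hs)] at hp
  have hψ0 := hψ 0 (by omega)
  rw [h0] at hψ0
  refine ⟨ψ, hψ0.2, fun t ht => ⟨fun hT => ?_, fun hB => ?_⟩⟩
  · exact key _ _ (by omega) (by omega) (by omega) ((hφ t ht).1 hT)
  · exact key _ _ (by omega) (by omega) (by omega) ((hφ t ht).2 hB)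

theorem walkAlong_qdirs_iff (hr : r ∈ R) :
    walkAlong (qdirs I) (.base a) (.top r hr) ↔ ∀ i ∈ I, a = r i := by
  constructor
  · intro hw i hi
    obtain ⟨ψ, hψ0, hψ⟩ := exists_pathHom_of_walkAlong hw
    obtain ⟨_, h⟩ := memVal_of_isPathHom hψ hψ0 ⟨i.isLt, hi⟩
    simpa [idxSet] using h
  · intro hI
    have hIJ : ∀ l, MemVal I l → MemVal (idxSet a r) l :=
      fun l ⟨hl, h⟩ => ⟨hl, by simp [idxSet, hI _ h]⟩
    have hedge : ∀ x y, pedge (qdirs (idxSet a r)) x y →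
        dedge (vertAt a r hr x) (vertAt a r hr y) := fun x y h =>
      ⟨a, r, hr, x, y, isAt_vertAt hr (pedge_le_length h).1,
        isAt_vertAt hr (pedge_le_length h).2, h⟩
    refine ⟨vertAt a r hr ∘ qfold I (idxSet a r), by simp [qfold_zero, vertAt], ?_,
      (isPathHom_qfold hIJ).comp hedge⟩
    simp only [Function.comp, qfold_length]
    exact vertAt_eq_of_isAt hr ⟨rfl, rfl⟩

end DigraphD

section Restriction

variable {A : Type} [DecidableEq A] {k : ℕ} {R : Set (Fin k → A)} {ι : Type*}
  {F : (ι → DVert R) → DVert R}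

def Preserves (f : (ι → A) → A) (R : Set (Fin k → A)) : Prop :=
  ∀ ts : ι → Fin k → A, (∀ j, ts j ∈ R) → (fun i => f fun j => ts j i) ∈ R

/-- Walking along `Q_∅` to a fixed top vertex climbs `k + 2` levels, so it starts at a base. -/
lemma exists_apply_base_eq_base (hR : R.Nonempty)
    (hF : ∀ u v : ι → DVert R, (∀ j, dedge (u j) (v j)) → dedge (F u) (F v))
    (hidem : ∀ v, F (fun _ => v) = v) (a : ι → A) :
    ∃ b, F (fun j => .base (a j)) = .base b := by
  obtain ⟨r, hr⟩ := hR
  have hw := walkAlong_pi hF fun j => (walkAlong_qdirs_iff (I := ∅) (a := a j) hr).2 (by simp)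
  rw [hidem] at hw
  have := lvlD_of_walkAlong hw
  rw [phgt_length, show lvlD (DVert.top r hr) = k + 2 from rfl] at this
  exact exists_base_of_lvlD_eq_zero (by omega)

theorem exists_preserves_restrict (hR : R.Nonempty)
    (hF : ∀ u v : ι → DVert R, (∀ j, dedge (u j) (v j)) → dedge (F u) (F v))
    (hidem : ∀ v, F (fun _ => v) = v) :
    ∃ f : (ι → A) → A, Preserves f R ∧ ∀ a, F (fun j => .base (a j)) = .base (f a) := by
  choose f hf using exists_apply_base_eq_base hR hF hidem
  refine ⟨f, fun ts hts => ?_, hf⟩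
  obtain ⟨r₀, hr₀⟩ := hR
  rcases Nat.eq_zero_or_pos k with rfl | hk
  · exact Subsingleton.elim r₀ (fun i => f fun j => ts j i) ▸ hr₀
  have hw : ∀ i, walkAlong (qdirs {i}) (.base (f fun j => ts j i))
      (F fun j => .top (ts j) (hts j)) := fun i => by
    rw [← hf]
    exact walkAlong_pi hF fun j => (walkAlong_qdirs_iff (hts j)).2 (by simp)
  obtain ⟨r, hr, hFr⟩ := exists_top_of_lvlD_eq (R := R) (u := F fun j => .top (ts j) (hts j)) (by
    have := lvlD_of_walkAlong (hw ⟨0, hk⟩)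
    rw [phgt_length, show lvlD (DVert.base (R := R) (f fun j => ts j ⟨0, hk⟩)) = 0 from rfl]
      at this
    omega)
  rw [hFr] at hw
  convert hr using 1
  funext i
  exact (walkAlong_qdirs_iff hr).1 (hw i) i (Finset.mem_singleton_self i)

end Restriction

lemma IsWNU.of_base {A : Type} [DecidableEq A] {k : ℕ} {R : Set (Fin k → A)} {m : ℕ}
    {F : (Fin m → DVert R) → DVert R} (hW : IsWNU m F) {f : (Fin m → A) → A}
    (hf : ∀ a, F (fun j => .base (a j)) = .base (f a)) : IsWNU m f := by
  refine ⟨fun x => ?_, fun x y p q => ?_⟩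
  · have := hf fun _ => x
    rw [hW.1] at this
    exact (DVert.base.inj this).symm
  · have hp := hf fun i => if i = p then y else x
    have hq := hf fun i => if i = q then y else x
    simp only [apply_ite DVert.base] at hp hq
    exact DVert.base.inj (hp.symm.trans ((hW.2 _ _ p q).trans hq))

section Lift

open scoped Classical

variable {A : Type} [DecidableEq A] {k : ℕ} {R : Set (Fin k → A)}

def DVert.AtPeak : DVert R → Prop
  | .inner a r _ x _ _ => IsPeak (qdirs (idxSet a r)) x
  | _ => False

def DVert.AtValley : DVert R → Prop
  | .inner a r _ x _ _ => IsValley (qdirs (idxSet a r)) x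
  | _ => False

lemma DVert.atPeak_iff_of_isAt {u : DVert R} {a : A} {r : Fin k → A} {x : ℕ}
    (hu : isAt u a r x) : u.AtPeak ↔ IsPeak (qdirs (idxSet a r)) x := by
  cases u with
  | base =>
    obtain ⟨rfl, rfl⟩ := hu
    simp only [DVert.AtPeak, false_iff, isPeak_iff, getD_qdirs_zero]
    simp
  | top =>
    obtain ⟨rfl, rfl⟩ := hu
    simp [DVert.AtPeak, isPeak_iff, plen]
  | inner =>
    obtain ⟨rfl, rfl, rfl⟩ := hu
    rfl

lemma DVert.atValley_iff_of_isAt {u : DVert R} {a : A} {r : Fin k → A} {x : ℕ}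
    (hu : isAt u a r x) : u.AtValley ↔ IsValley (qdirs (idxSet a r)) x := by
  cases u with
  | base =>
    obtain ⟨rfl, rfl⟩ := hu
    simp [DVert.AtValley, IsValley]
  | top =>
    obtain ⟨rfl, rfl⟩ := hu
    simpa [DVert.AtValley, plen] using not_isValley_length _
  | inner =>
    obtain ⟨rfl, rfl, rfl⟩ := hu
    rfl

variable {ι : Type*} [Nonempty ι]

/-- Chosen among the lowest coordinates as a set, so that shifting all levels by one does not
change it (`lowestIdx_congr`). -/
noncomputable def lowestIdx (u : ι → DVert R) : ι :=
  Classical.epsilon fun j => ∀ j', lvlD (u j) ≤ lvlD (u j')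

lemma lvlD_lowestIdx_le (u : ι → DVert R) (j : ι) : lvlD (u (lowestIdx u)) ≤ lvlD (u j) :=
  Classical.epsilon_spec (p := fun j => ∀ j', lvlD (u j) ≤ lvlD (u j'))
    ⟨Function.argmin fun j => lvlD (u j), fun j => Function.argmin_le (fun j => lvlD (u j)) j⟩ j

lemma lowestIdx_congr {u v : ι → DVert R} (h : ∀ j, lvlD (v j) = lvlD (u j) + 1) :
    lowestIdx v = lowestIdx u := by
  simp only [lowestIdx, h, Nat.add_le_add_iff_right]

noncomputable def foldVert (f : (ι → A) → A) (hf : Preserves f R)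
    (p : ℕ × (ι → A) × {r : ι → Fin k → A // ∀ j, r j ∈ R}) (P V : Prop) : DVert R :=
  vertAt (f p.2.1) (fun i => f fun j => p.2.2.1 j i) (hf _ p.2.2.2)
    (foldPos (idxSet (f p.2.1) (fun i => f fun j => p.2.2.1 j i)) p.1 P V)

/-- The polymorphism of `D(A)` induced by a polymorphism `f` of `(A; R)`. A tuple of vertices
at a common height `s` on the paths `P_(a j, r j)` is sent to `P_(f a, f r)`, at the image of `s`
and of its peaks and valleys under `foldPos`; a tuple with several levels is sent to its lowest
entry. -/
noncomputable def liftOp (f : (ι → A) → A) (hf : Preserves f R) (u : ι → DVert R) : DVert R :=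
  if hb : ∀ j, ∃ a, u j = .base a then
    .base (f fun j => (hb j).choose)
  else if ht : ∀ j, ∃ r hr, u j = .top r hr then
    .top (fun i => f fun j => (ht j).choose i) (hf _ fun j => (ht j).choose_spec.choose)
  else if hi : ∃ p : ℕ × (ι → A) × {r : ι → Fin k → A // ∀ j, r j ∈ R},
      ∀ j, lvlD (u j) = p.1 ∧ ∃ x, isAt (u j) (p.2.1 j) (p.2.2.1 j) x then
    foldVert f hf hi.choose (∃ j, (u j).AtPeak) (∃ j, (u j).AtValley)
  else u (lowestIdx u)

variable {f : (ι → A) → A} (hf : Preserves f R) {u : ι → DVert R}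

lemma liftOp_base {a : ι → A} (hu : ∀ j, u j = .base (a j)) : liftOp f hf u = .base (f a) := by
  have hb : ∀ j, ∃ a, u j = .base a := fun j => ⟨a j, hu j⟩
  rw [liftOp, dif_pos hb]
  congr
  funext j
  exact DVert.base.inj ((hb j).choose_spec.symm.trans (hu j))

lemma liftOp_top {r : ι → Fin k → A} (hr : ∀ j, r j ∈ R) (hu : ∀ j, u j = .top (r j) (hr j)) :
    liftOp f hf u = .top (fun i => f fun j => r j i) (hf r hr) := by
  obtain ⟨j₀⟩ := ‹Nonempty ι›
  have hb : ¬ ∀ j, ∃ a, u j = .base a := fun h => by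
    obtain ⟨a, ha⟩ := h j₀
    rw [hu j₀] at ha; cases ha
  have ht : ∀ j, ∃ r hr, u j = .top r hr := fun j => ⟨r j, hr j, hu j⟩
  have hc : ∀ j, (ht j).choose = r j := fun j => by
    obtain ⟨_, h⟩ := (ht j).choose_spec
    exact DVert.top.inj (h.symm.trans (hu j))
  rw [liftOp, dif_neg hb, dif_pos ht]
  simp only [hc]

lemma liftOp_inner {a : ι → A} {r : ι → Fin k → A} (hr : ∀ j, r j ∈ R) {x : ι → ℕ} {s : ℕ}
    (hu : ∀ j, isAt (u j) (a j) (r j) (x j)) (hs : ∀ j, lvlD (u j) = s) (h₀ : 0 < s)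
    (hk : s < k + 2) :
    liftOp f hf u = foldVert f hf (s, a, ⟨r, hr⟩) (∃ j, (u j).AtPeak) (∃ j, (u j).AtValley) := by
  obtain ⟨j₀⟩ := ‹Nonempty ι›
  unfold liftOp
  split_ifs with hb ht hi
  · obtain ⟨b, hb⟩ := hb j₀
    have := hs j₀; rw [hb] at this; simp [lvlD] at this; omega
  · obtain ⟨r', hr', ht⟩ := ht j₀
    have := hs j₀; rw [ht] at this; simp [lvlD] at this; omega
  · have hc := hi.choose_spec
    generalize hi.choose = p at hc ⊢
    obtain ⟨s', a', r', hr'⟩ := p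
    obtain rfl : s' = s := (hc j₀).1.symm.trans (hs j₀)
    have hpath : ∀ j, a' j = a j ∧ r' j = r j := fun j =>
      isAt_path_unique (hu j) (hc j).2.choose_spec (by rw [hs j]; omega) (by rw [hs j]; omega)
    obtain rfl : a' = a := funext fun j => (hpath j).1
    obtain rfl : r' = r := funext fun j => (hpath j).2
    rfl
  · exact absurd ⟨(s, a, ⟨r, hr⟩), fun j => ⟨hs j, x j, hu j⟩⟩ hi

lemma liftOp_of_not_const (hne : ¬ ∀ j j', lvlD (u j) = lvlD (u j')) :
    liftOp f hf u = u (lowestIdx u) := by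
  unfold liftOp
  split_ifs with hb ht hi
  · refine absurd (fun j j' => ?_) hne
    obtain ⟨a, ha⟩ := hb j
    obtain ⟨a', ha'⟩ := hb j'
    rw [ha, ha']; rfl
  · refine absurd (fun j j' => ?_) hne
    obtain ⟨r, hr, h⟩ := ht j
    obtain ⟨r', hr', h'⟩ := ht j'
    rw [h, h']; rfl
  · exact absurd (fun j j' => (hi.choose_spec j).1.trans (hi.choose_spec j').1.symm) hne
  · rfl

theorem liftOp_isAt {a : ι → A} {r : ι → Fin k → A} (hr : ∀ j, r j ∈ R) {x : ι → ℕ} {s : ℕ}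
    (hu : ∀ j, isAt (u j) (a j) (r j) (x j)) (hs : ∀ j, lvlD (u j) = s) :
    isAt (liftOp f hf u) (f a) (fun i => f fun j => r j i)
      (foldPos (idxSet (f a) (fun i => f fun j => r j i)) s
        (∃ j, IsPeak (qdirs (idxSet (a j) (r j))) (x j))
        (∃ j, IsValley (qdirs (idxSet (a j) (r j))) (x j))) := by
  obtain ⟨j₀⟩ := ‹Nonempty ι›
  have hx : ∀ j, foldPos (idxSet (a j) (r j)) s (IsPeak (qdirs (idxSet (a j) (r j))) (x j))
      (IsValley (qdirs (idxSet (a j) (r j))) (x j)) = x j := fun j =>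
    foldPos_self _ (isAt_level (hu j)).1 (by rw [← (isAt_level (hu j)).2, hs j])
  have hsk : s ≤ k + 2 := hs j₀ ▸ lvlD_le _
  rcases Nat.eq_zero_or_pos s with rfl | h₀
  · have hb : ∀ j, u j = .base (a j) := fun j => by
      rw [← vertAt_eq_of_isAt (hr j) (hu j), ← hx j]
      simp [foldPos, vertAt_zero]
    rw [liftOp_base hf hb]
    simp [foldPos, isAt]
  rcases Nat.lt_or_ge s (k + 2) with hk | hk
  · rw [liftOp_inner hf hr hu hs h₀ hk, foldVert]
    simp only [fun j => DVert.atPeak_iff_of_isAt (hu j), fun j => DVert.atValley_iff_of_isAt (hu j)]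
    exact isAt_vertAt _ (foldPos_le _)
  · obtain rfl : s = k + 2 := by omega
    have ht : ∀ j, u j = .top (r j) (hr j) := fun j => by
      rw [← vertAt_eq_of_isAt (hr j) (hu j), ← hx j]
      simpa [foldPos, plen] using vertAt_plen (hr j)
    rw [liftOp_top hf hr ht]
    exact ⟨rfl, by simp [foldPos, plen]⟩

lemma memVal_idxSet_apply {a : ι → A} {r : ι → Fin k → A} {l : ℕ}
    (h : ∀ j, MemVal (idxSet (a j) (r j)) l) :
    MemVal (idxSet (f a) (fun i => f fun j => r j i)) l := by
  obtain ⟨j₀⟩ := ‹Nonempty ι›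
  obtain ⟨hl, -⟩ := h j₀
  refine ⟨hl, ?_⟩
  have : a = fun j => r j ⟨l, hl⟩ := funext fun j => by
    obtain ⟨_, hj⟩ := h j
    simpa [idxSet] using hj
  simp [idxSet, this]

theorem liftOp_dedge {v : ι → DVert R} (h : ∀ j, dedge (u j) (v j)) :
    dedge (liftOp f hf u) (liftOp f hf v) := by
  have hlv : ∀ j, lvlD (v j) = lvlD (u j) + 1 := fun j => lvlD_dedge (h j)
  by_cases hc : ∀ j j', lvlD (u j) = lvlD (u j')
  · obtain ⟨j₀⟩ := ‹Nonempty ι›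
    choose a r hr x y hx hy hxy using h
    have hs : ∀ j, lvlD (u j) = lvlD (u j₀) := fun j => hc j j₀
    refine ⟨f a, _, hf r hr, _, _, liftOp_isAt hf hr hx hs,
      liftOp_isAt hf hr hy (fun j => by rw [hlv, hs]),
      foldPos_pedge (fun _ => memVal_idxSet_apply) hxy fun j => ?_⟩
    rw [← (isAt_level (hx j)).2, hs j]
  · have hc' : ¬ ∀ j j', lvlD (v j) = lvlD (v j') := fun h' => hc fun j j' => by
      have := h' j j'
      rw [hlv, hlv] at this
      omega
    rw [liftOp_of_not_const hf hc, liftOp_of_not_const hf hc', lowestIdx_congr hlv]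
    exact h _

lemma liftOp_const (hidem : ∀ a, f (fun _ => a) = a) (v : DVert R) :
    liftOp f hf (fun _ => v) = v := by
  cases v with
  | base a => rw [liftOp_base hf (a := fun _ => a) fun _ => rfl, hidem]
  | top r hr => simp [liftOp_top hf (r := fun _ => r) (fun _ => hr) (fun _ => rfl), hidem]
  | inner a r hr x h₀ h₁ =>
    have hu : isAt (DVert.inner a r hr x h₀ h₁) a r x := ⟨rfl, rfl, rfl⟩
    have := liftOp_isAt hf (a := fun _ => a) (r := fun _ => r) (fun _ => hr) (x := fun _ => x)
      (fun _ => hu) fun _ => rfl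
    simp only [hidem, exists_const] at this
    rw [foldPos_self _ h₁.le (isAt_level hu).2.symm] at this
    exact (vertAt_eq_of_isAt hr this).symm.trans (vertAt_eq_of_isAt hr hu)

end Lift

section WNU

variable {A : Type} [DecidableEq A] {k : ℕ} {R : Set (Fin k → A)}

lemma exists_apply_ite_iff {ι α : Type*} [Nontrivial ι] [DecidableEq ι] (P : α → Prop)
    (x y : α) (p : ι) :
    (∃ j, P (if j = p then y else x)) ↔ P y ∨ P x := by
  constructor
  · rintro ⟨j, hj⟩
    split_ifs at hj
    exacts [Or.inl hj, Or.inr hj]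
  · rintro (hy | hx)
    · exact ⟨p, by simpa using hy⟩
    · obtain ⟨q, hq⟩ := exists_ne p
      exact ⟨q, by simpa [hq] using hx⟩

lemma liftOp_ite_of_lvlD_ne {ι : Type*} [Nontrivial ι] [DecidableEq ι] {f : (ι → A) → A}
    (hf : Preserves f R) {x y : DVert R} (hxy : lvlD x ≠ lvlD y) (p : ι) :
    liftOp f hf (fun i => if i = p then y else x) = if lvlD x < lvlD y then x else y := by
  obtain ⟨q, hq⟩ := exists_ne p
  have hne : ¬ ∀ j j', lvlD (if j = p then y else x) = lvlD (if j' = p then y else x) :=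
    fun h => hxy (by simpa [hq] using h q p)
  rw [liftOp_of_not_const hf hne]
  have h₁ := lvlD_lowestIdx_le (fun i => if i = p then y else x) p
  have h₂ := lvlD_lowestIdx_le (fun i => if i = p then y else x) q
  simp only [if_true, hq, if_false] at h₁ h₂ ⊢
  split_ifs at h₁ h₂ ⊢ <;> first | rfl | omega

lemma liftOp_ite_of_lvlD_eq {m : ℕ} [Nontrivial (Fin m)] {f : (Fin m → A) → A}
    (hf : Preserves f R) (hW : IsWNU m f) {x y : DVert R} (hxy : lvlD x = lvlD y) (p q : Fin m) :
    liftOp f hf (fun i => if i = p then y else x) =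
      liftOp f hf (fun i => if i = q then y else x) := by
  have hcols : ∀ r r' : Fin k → A, (fun i => f fun j => (if j = p then r' else r) i) =
      (fun i => f fun j => (if j = q then r' else r) i) := fun r r' => funext fun i => by
    simpa only [apply_ite (fun g : Fin k → A => g i)] using hW.2 (r i) (r' i) p q
  rcases Nat.eq_zero_or_pos (lvlD x) with h₀ | h₀
  · obtain ⟨a, rfl⟩ := exists_base_of_lvlD_eq_zero h₀
    obtain ⟨b, rfl⟩ := exists_base_of_lvlD_eq_zero (hxy ▸ h₀)
    rw [liftOp_base hf (a := fun i => if i = p then b else a) (fun i => by split_ifs <;> rfl),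
      liftOp_base hf (a := fun i => if i = q then b else a) (fun i => by split_ifs <;> rfl), hW.2]
  rcases Nat.lt_or_ge (lvlD x) (k + 2) with hk | hk
  · obtain ⟨a, r, hr, x₀, hx⟩ := exists_isAt_of_lvlD h₀ hk
    obtain ⟨b, r', hr', y₀, hy⟩ := exists_isAt_of_lvlD (hxy ▸ h₀) (hxy ▸ hk)
    have key : ∀ p : Fin m, liftOp f hf (fun i => if i = p then y else x) =
        foldVert f hf (lvlD x, fun i => if i = p then b else a,
          ⟨fun i => if i = p then r' else r, fun i => by dsimp only; split_ifs <;> assumption⟩)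
          (y.AtPeak ∨ x.AtPeak) (y.AtValley ∨ x.AtValley) := fun p => by
      rw [liftOp_inner hf (a := fun i => if i = p then b else a)
        (r := fun i => if i = p then r' else r) _ (x := fun i => if i = p then y₀ else x₀)
        (fun i => by split_ifs <;> assumption) (fun i => by split_ifs <;> simp [hxy]) h₀ hk,
        exists_apply_ite_iff DVert.AtPeak, exists_apply_ite_iff DVert.AtValley]
    rw [key p, key q]
    simp only [foldVert, hW.2 a b p q, hcols r r']
  · obtain ⟨r, hr, rfl⟩ := exists_top_of_lvlD_eq (le_antisymm (lvlD_le _) hk)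
    obtain ⟨r', hr', rfl⟩ := exists_top_of_lvlD_eq (hxy ▸ le_antisymm (lvlD_le _) hk)
    rw [liftOp_top hf (r := fun i => if i = p then r' else r) (fun i => by split_ifs <;> assumption)
        (fun i => by split_ifs <;> rfl),
      liftOp_top hf (r := fun i => if i = q then r' else r) (fun i => by split_ifs <;> assumption)
        (fun i => by split_ifs <;> rfl)]
    simp only [hcols r r']

theorem liftOp_isWNU {m : ℕ} [Nontrivial (Fin m)] {f : (Fin m → A) → A} (hf : Preserves f R)
    (hW : IsWNU m f) : IsWNU m (liftOp f hf) := by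
  refine ⟨liftOp_const hf hW.1, fun x y p q => ?_⟩
  by_cases hxy : lvlD x = lvlD y
  · exact liftOp_ite_of_lvlD_eq hf hW hxy p q
  · rw [liftOp_ite_of_lvlD_ne hf hxy p, liftOp_ite_of_lvlD_ne hf hxy q]

end WNU

theorem WNU_iff_D_WNU_general {A : Type} [DecidableEq A] {k : ℕ}
    (R : Set (Fin k → A)) (hR : R.Nonempty) (m : ℕ) (hm : 2 ≤ m) :
    (∃ f : (Fin m → A) → A,
      (∀ ts : Fin m → (Fin k → A), (∀ j, ts j ∈ R) →
        (fun i => f (fun j => ts j i)) ∈ R) ∧ IsWNU m f) ↔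
    (∃ F : (Fin m → DVert R) → DVert R,
      (∀ u v : Fin m → DVert R, (∀ j, dedge (u j) (v j)) → dedge (F u) (F v)) ∧
      IsWNU m F) := by
  have : Nontrivial (Fin m) := Fin.nontrivial_iff_two_le.2 hm
  constructor
  · rintro ⟨f, hf, hW⟩
    exact ⟨liftOp f hf, fun u v => liftOp_dedge hf, liftOp_isWNU hf hW⟩
  · rintro ⟨F, hF, hW⟩
    obtain ⟨f, hf, hfF⟩ := exists_preserves_restrict hR hF hW.1
    exact ⟨f, hf, hW.of_base hfF⟩

/-- `(A; R)` has an `m`-ary weak near-unanimity polymorphism (for `m ≥ 2`) if and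
only if the digraph `D(A)` has one. -/
theorem WNU_iff_D_WNU {A : Type} [DecidableEq A] [Fintype A] {k : ℕ}
    (R : Set (Fin k → A)) (hR : R.Nonempty) (m : ℕ) (hm : 2 ≤ m) :
    (∃ f : (Fin m → A) → A,
      (∀ ts : Fin m → (Fin k → A), (∀ j, ts j ∈ R) →
        (fun i => f (fun j => ts j i)) ∈ R) ∧ IsWNU m f) ↔
    (∃ F : (Fin m → DVert R) → DVert R,
      (∀ u v : Fin m → DVert R, (∀ j, dedge (u j) (v j)) → dedge (F u) (F v)) ∧
      IsWNU m F) :=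
  WNU_iff_D_WNU_general R hR m hm
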